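/- arXiv:2402.16319 — 2 statements merged into one kernel-verified Lean document; each statement's English description precedes it below -/
import Mathlib

section
/- Eckart–Young theorem (spectral norm): for any real matrix A and any matrix A' of rank at most k, the truncated-SVD approximation A_{(k)} satisfies ‖A − A_{(k)}‖₂ ≤ ‖A − A'‖₂, where ‖·‖₂ is the operator (spectral) norm. -/
/-!
Write `A = ∑ᵢ λᵢ uᵢ vᵢᵀ`, so that `A - A_{(k)} = ∑_{i ≥ k} λᵢ uᵢ vᵢᵀ`. By Bessel's inequality an
orthonormal expansion has operator norm at most the largest absolute value of its coefficients, so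
it suffices to show `λᵢ ≤ ‖A - A'‖` for every `i ≥ k`. The span of `v₀, …, vᵢ` has dimension
`i + 1 > rank A'`, hence contains a unit vector `w` with `A' w = 0`; then
`‖(A - A') w‖ = ‖A w‖ ≥ λᵢ`, since `λⱼ ≥ λᵢ` for all `j ≤ i`.
-/

open Matrix

noncomputable def opNorm {n m : ℕ} (A : Matrix (Fin n) (Fin m) ℝ) : ℝ :=
  ‖LinearMap.toContinuousLinearMap (Matrix.toEuclideanLin A)‖

open InnerProductSpace Module Submodule
open scoped RealInnerProductSpace

theorem le_norm_sub_of_finrank_range_lt {𝕜 E F : Type*} [NontriviallyNormedField 𝕜]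
    [NormedAddCommGroup E] [NormedSpace 𝕜 E] [NormedAddCommGroup F] [NormedSpace 𝕜 F]
    [FiniteDimensional 𝕜 F] (T B : F →L[𝕜] E) (S : Submodule 𝕜 F) {σ : ℝ}
    (hS : ∀ x ∈ S, σ * ‖x‖ ≤ ‖T x‖)
    (hB : finrank 𝕜 (LinearMap.range (B : F →ₗ[𝕜] E)) < finrank 𝕜 S) :
    σ ≤ ‖T - B‖ := by
  have hSK : ¬ Disjoint S (LinearMap.ker (B : F →ₗ[𝕜] E)) := fun h => by
    have := Submodule.finrank_add_finrank_le_of_disjoint h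
    have := LinearMap.finrank_range_add_finrank_ker (B : F →ₗ[𝕜] E)
    omega
  obtain ⟨w, ⟨hwS, hwK⟩, hw⟩ :=
    Submodule.exists_mem_ne_zero_of_ne_bot (mt disjoint_iff.mpr hSK)
  have hBw : B w = 0 := hwK
  refine le_of_mul_le_mul_right ?_ (norm_pos_iff.mpr hw)
  calc σ * ‖w‖ ≤ ‖T w‖ := hS w hwS
    _ = ‖(T - B) w‖ := by rw [_root_.sub_apply, hBw, sub_zero]
    _ ≤ ‖T - B‖ * ‖w‖ := (T - B).le_opNorm w

section Orthonormal

variable {ι E F : Type*} [NormedAddCommGroup E] [InnerProductSpace ℝ E]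
  [NormedAddCommGroup F] [InnerProductSpace ℝ F] {U : ι → E} {V : ι → F}

theorem Orthonormal.norm_sum_smul_sq (hU : Orthonormal ℝ U) (s : Finset ι) (a : ι → ℝ) :
    ‖∑ i ∈ s, a i • U i‖ ^ 2 = ∑ i ∈ s, a i ^ 2 := by
  rw [← real_inner_self_eq_norm_sq, hU.inner_sum]
  simp only [conj_trivial, sq]

theorem Orthonormal.norm_sq_eq_sum_inner_sq_of_mem_span (hV : Orthonormal ℝ V) {t : Finset ι}
    {x : F} (hx : x ∈ span ℝ (V '' t)) : ‖x‖ ^ 2 = ∑ i ∈ t, ⟪V i, x⟫ ^ 2 := by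
  obtain ⟨l, hl, rfl⟩ := (Finsupp.mem_span_image_iff_linearCombination ℝ).mp hx
  rw [Finsupp.linearCombination_apply_of_mem_supported ℝ hl, hV.norm_sum_smul_sq]
  exact Finset.sum_congr rfl fun i hi => by rw [hV.inner_right_sum _ hi]

theorem Orthonormal.finrank_span_image_finset (hV : Orthonormal ℝ V) (t : Finset ι) :
    finrank ℝ (span ℝ (V '' t)) = t.card := by
  rw [Set.image_eq_range, finrank_span_eq_card (b := fun i : (t : Set ι) => V i)
    (hV.linearIndependent.comp _ Subtype.val_injective)]
  exact Fintype.card_coe t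

theorem sum_rankOne_apply (s : Finset ι) (c : ι → ℝ) (U : ι → E) (V : ι → F) (x : F) :
    (∑ i ∈ s, c i • rankOne ℝ (U i) (V i)) x = ∑ i ∈ s, (c i * ⟪V i, x⟫) • U i := by
  simp only [_root_.sum_apply, _root_.smul_apply, rankOne_apply, smul_smul]

theorem Orthonormal.norm_sum_rankOne_apply_sq (hU : Orthonormal ℝ U) (s : Finset ι)
    (c : ι → ℝ) (V : ι → F) (x : F) :
    ‖(∑ i ∈ s, c i • rankOne ℝ (U i) (V i)) x‖ ^ 2 = ∑ i ∈ s, (c i * ⟪V i, x⟫) ^ 2 := by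
  rw [sum_rankOne_apply, hU.norm_sum_smul_sq]

theorem norm_sum_rankOne_le (hU : Orthonormal ℝ U) (hV : Orthonormal ℝ V) {s : Finset ι}
    {c : ι → ℝ} {σ : ℝ} (hσ : 0 ≤ σ) (hc : ∀ i ∈ s, |c i| ≤ σ) :
    ‖∑ i ∈ s, c i • rankOne ℝ (U i) (V i)‖ ≤ σ := by
  refine ContinuousLinearMap.opNorm_le_bound _ hσ fun x => ?_
  refine (pow_le_pow_iff_left₀ (norm_nonneg _) (by positivity) two_ne_zero).mp ?_
  calc ‖(∑ i ∈ s, c i • rankOne ℝ (U i) (V i)) x‖ ^ 2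
      = ∑ i ∈ s, c i ^ 2 * ⟪V i, x⟫ ^ 2 := by
        simp only [hU.norm_sum_rankOne_apply_sq, mul_pow]
    _ ≤ ∑ i ∈ s, σ ^ 2 * ⟪V i, x⟫ ^ 2 := by
        refine Finset.sum_le_sum fun i hi => mul_le_mul_of_nonneg_right ?_ (sq_nonneg _)
        exact sq_le_sq' (abs_le.mp (hc i hi)).1 (abs_le.mp (hc i hi)).2
    _ = σ ^ 2 * ∑ i ∈ s, ‖⟪V i, x⟫‖ ^ 2 := by
        simp only [Finset.mul_sum, Real.norm_eq_abs, sq_abs]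
    _ ≤ σ ^ 2 * ‖x‖ ^ 2 := by gcongr; exact hV.sum_inner_products_le x
    _ = (σ * ‖x‖) ^ 2 := (mul_pow _ _ _).symm

theorem mul_norm_le_norm_sum_rankOne_apply [Fintype ι] (hU : Orthonormal ℝ U)
    (hV : Orthonormal ℝ V) {t : Finset ι} {c : ι → ℝ} {σ : ℝ} (hσ : 0 ≤ σ)
    (hc : ∀ i ∈ t, σ ≤ c i) {x : F} (hx : x ∈ span ℝ (V '' t)) :
    σ * ‖x‖ ≤ ‖(∑ i, c i • rankOne ℝ (U i) (V i)) x‖ := by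
  refine (pow_le_pow_iff_left₀ (by positivity) (norm_nonneg _) two_ne_zero).mp ?_
  calc (σ * ‖x‖) ^ 2 = ∑ i ∈ t, σ ^ 2 * ⟪V i, x⟫ ^ 2 := by
        rw [mul_pow, hV.norm_sq_eq_sum_inner_sq_of_mem_span hx, Finset.mul_sum]
    _ ≤ ∑ i ∈ t, (c i * ⟪V i, x⟫) ^ 2 := by
        gcongr with i hi
        rw [mul_pow]
        gcongr
        exact hc i hi
    _ ≤ ∑ i, (c i * ⟪V i, x⟫) ^ 2 :=
        Finset.sum_le_sum_of_subset_of_nonneg t.subset_univ fun i _ _ => sq_nonneg _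
    _ = ‖(∑ i, c i • rankOne ℝ (U i) (V i)) x‖ ^ 2 := (hU.norm_sum_rankOne_apply_sq ..).symm

theorem le_norm_sum_rankOne_sub [Fintype ι] [FiniteDimensional ℝ F] (hU : Orthonormal ℝ U)
    (hV : Orthonormal ℝ V) {t : Finset ι} {c : ι → ℝ} {σ : ℝ} (hσ : 0 ≤ σ)
    (hc : ∀ i ∈ t, σ ≤ c i) (B : F →L[ℝ] E)
    (hB : finrank ℝ (LinearMap.range (B : F →ₗ[ℝ] E)) < t.card) :
    σ ≤ ‖∑ i, c i • rankOne ℝ (U i) (V i) - B‖ := by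
  refine le_norm_sub_of_finrank_range_lt _ B (span ℝ (V '' t))
    (fun x hx => mul_norm_le_norm_sum_rankOne_apply hU hV hσ hc hx) ?_
  rwa [hV.finrank_span_image_finset]

end Orthonormal

section Matrix

variable {ι m n : Type*} [Fintype m] [Fintype n]

theorem orthonormal_toLp_of_dotProduct [DecidableEq ι] {u : ι → n → ℝ}
    (hu : ∀ i j, u i ⬝ᵥ u j = if i = j then 1 else 0) :
    Orthonormal ℝ (fun i => WithLp.toLp 2 (u i)) := by
  rw [orthonormal_iff_ite]
  intro i j
  rw [EuclideanSpace.inner_toLp_toLp, ← hu i j]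
  simp [dotProduct_comm]

variable [DecidableEq n]

theorem toEuclideanLin_vecMulVec (u : m → ℝ) (v : n → ℝ) :
    toEuclideanLin (vecMulVec u v) =
      (rankOne ℝ (WithLp.toLp 2 u) (WithLp.toLp 2 v)).toLinearMap := by
  refine (LinearEquiv.eq_symm_apply _).mp ?_
  rw [symm_toEuclideanLin_rankOne]
  simp

theorem toContinuousLinearMap_toEuclideanLin_sum_smul_vecMulVec (s : Finset ι) (c : ι → ℝ)
    (u : ι → m → ℝ) (v : ι → n → ℝ) :
    LinearMap.toContinuousLinearMap (toEuclideanLin (∑ i ∈ s, c i • vecMulVec (u i) (v i))) =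
      ∑ i ∈ s, c i • rankOne ℝ (WithLp.toLp 2 (u i)) (WithLp.toLp 2 (v i)) := by
  ext1 x
  simp [toEuclideanLin_vecMulVec]

theorem rank_eq_finrank_range_toEuclideanLin (A : Matrix m n ℝ) :
    A.rank = finrank ℝ (LinearMap.range (toEuclideanLin A)) := by
  rw [toEuclideanLin, toLpLin_eq_toLin]
  exact rank_eq_finrank_range_toLin A _ _

end Matrix

theorem eckart_young_spectral_general (n m r k : ℕ)
    (A A' : Matrix (Fin n) (Fin m) ℝ)
    (lam : Fin r → ℝ) (u : Fin r → Fin n → ℝ) (v : Fin r → Fin m → ℝ)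
    (hu : ∀ i j, u i ⬝ᵥ u j = if i = j then (1 : ℝ) else 0)
    (hv : ∀ i j, v i ⬝ᵥ v j = if i = j then (1 : ℝ) else 0)
    (hpos : ∀ i, 0 < lam i)
    (hmono : ∀ i j : Fin r, i ≤ j → lam j ≤ lam i)
    (hA : A = ∑ i, lam i • vecMulVec (u i) (v i))
    (hA' : A'.rank ≤ k) :
    opNorm (A - ∑ i ∈ Finset.univ.filter (fun i : Fin r => (i : ℕ) < k),
      lam i • vecMulVec (u i) (v i)) ≤ opNorm (A - A') := by
  have hU := orthonormal_toLp_of_dotProduct hu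
  have hV := orthonormal_toLp_of_dotProduct hv
  have htail : A - ∑ i ∈ Finset.univ.filter (fun i : Fin r => (i : ℕ) < k),
      lam i • vecMulVec (u i) (v i) =
      ∑ i ∈ Finset.univ.filter (fun i : Fin r => ¬ (i : ℕ) < k),
        lam i • vecMulVec (u i) (v i) := by
    rw [hA, ← Finset.sum_filter_add_sum_filter_not _ (fun i : Fin r => (i : ℕ) < k),
      add_sub_cancel_left]
  rw [htail, opNorm, toContinuousLinearMap_toEuclideanLin_sum_smul_vecMulVec]
  refine norm_sum_rankOne_le hU hV (norm_nonneg _) fun i hi => ?_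
  rw [abs_of_pos (hpos i), opNorm, map_sub, map_sub, hA,
    toContinuousLinearMap_toEuclideanLin_sum_smul_vecMulVec]
  refine le_norm_sum_rankOne_sub hU hV (t := Finset.Iic i) (hpos i).le
    (fun j hj => hmono j i (Finset.mem_Iic.mp hj)) _ ?_
  rw [Fin.card_Iic, LinearMap.coe_toContinuousLinearMap, ← rank_eq_finrank_range_toEuclideanLin]
  simp only [Finset.mem_filter, Finset.mem_univ, true_and, not_lt] at hi
  omega

/-- Eckart–Young theorem (spectral norm): the rank-`k` truncated SVD `A_{(k)}` is a best
rank-`≤ k` approximation of `A` in operator norm. -/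
theorem eckart_young_spectral (n m r k : ℕ) (hk : k ≤ r)
    (A A' : Matrix (Fin n) (Fin m) ℝ)
    (lam : Fin r → ℝ) (u : Fin r → Fin n → ℝ) (v : Fin r → Fin m → ℝ)
    (hu : ∀ i j, u i ⬝ᵥ u j = if i = j then (1 : ℝ) else 0)
    (hv : ∀ i j, v i ⬝ᵥ v j = if i = j then (1 : ℝ) else 0)
    (hpos : ∀ i, 0 < lam i)
    (hmono : ∀ i j : Fin r, i ≤ j → lam j ≤ lam i)
    (hA : A = ∑ i, lam i • vecMulVec (u i) (v i))
    (hA' : A'.rank ≤ k) :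
    opNorm (A - ∑ i ∈ Finset.univ.filter (fun i : Fin r => (i : ℕ) < k),
      lam i • vecMulVec (u i) (v i)) ≤ opNorm (A - A') :=
  eckart_young_spectral_general n m r k A A' lam u v hu hv hpos hmono hA hA'
end

section
/- Eckart–Young theorem (Frobenius norm): for any real matrix A and any matrix A' of rank at most k, ‖A − A_{(k)}‖_F ≤ ‖A − A'‖_F, where A_{(k)} is the rank-k truncated SVD of A. -/
open Matrix

/-- The Frobenius norm of a real rectangular matrix. -/
noncomputable def frobNorm {n m : ℕ} (A : Matrix (Fin n) (Fin m) ℝ) : ℝ :=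
  Real.sqrt (∑ i, ∑ j, (A i j)^2)

/-!
Let `P` be the orthogonal projection onto the column space `K` of `A'`, so `dim K ≤ k`.
Column by column, `‖A - A'‖² ≥ ‖A - PA‖² = ‖A‖² - ‖PA‖²`, and by orthonormality of the `vᵢ`,
`‖A‖² - ‖PA‖² = ∑ λᵢ² (1 - tᵢ)` with `tᵢ = ‖P uᵢ‖²`. The weights satisfy `0 ≤ tᵢ ≤ 1` and,
by Bessel's inequality for the `uᵢ` against an orthonormal basis of `K`, `∑ tᵢ ≤ dim K ≤ k`.
As the `λᵢ²` decrease, `∑ λᵢ² tᵢ ≤ ∑_{i<k} λᵢ²`, hence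
`‖A - A'‖² ≥ ∑_{i≥k} λᵢ² = ‖A - A_{(k)}‖²`.
-/

open scoped RealInnerProductSpace

theorem orthonormal_toLp_of_dotProduct_s5 {κ ι : Type*} [Fintype ι] [DecidableEq κ]
    {w : κ → ι → ℝ} (hw : ∀ a b, w a ⬝ᵥ w b = if a = b then (1 : ℝ) else 0) :
    Orthonormal ℝ (fun a => WithLp.toLp 2 (w a) : κ → EuclideanSpace ℝ ι) := by
  rw [orthonormal_iff_ite]
  intro a b
  simp [EuclideanSpace.inner_toLp_toLp, dotProduct_comm, hw]

theorem sum_norm_sq_sum_smul_of_orthonormal {κ ι E : Type*} [Fintype ι] [DecidableEq κ]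
    [NormedAddCommGroup E] [InnerProductSpace ℝ E]
    {v : κ → ι → ℝ} (hv : ∀ a b, v a ⬝ᵥ v b = if a = b then (1 : ℝ) else 0)
    (s : Finset κ) (z : κ → E) :
    ∑ j, ‖∑ a ∈ s, v a j • z a‖ ^ 2 = ∑ a ∈ s, ‖z a‖ ^ 2 := by
  calc ∑ j, ‖∑ a ∈ s, v a j • z a‖ ^ 2
      = ∑ a ∈ s, ∑ b ∈ s, (v a ⬝ᵥ v b) * ⟪z a, z b⟫ := by
        simp only [← real_inner_self_eq_norm_sq, sum_inner, inner_sum, real_inner_smul_left,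
          real_inner_smul_right, dotProduct, Finset.sum_mul]
        rw [Finset.sum_comm]
        refine Finset.sum_congr rfl fun a _ => ?_
        rw [Finset.sum_comm]
        refine Finset.sum_congr rfl fun b _ => Finset.sum_congr rfl fun j _ => ?_
        rw [real_inner_comm]
        ring
    _ = ∑ a ∈ s, ‖z a‖ ^ 2 := by
        simp [hv]

theorem toLp_col_sum_smul_vecMulVec {κ ι ι' : Type*} [Fintype ι] (s : Finset κ)
    (c : κ → ℝ) (u : κ → ι → ℝ) (v : κ → ι' → ℝ) (j : ι') :
    WithLp.toLp 2 ((∑ a ∈ s, c a • vecMulVec (u a) (v a)).col j)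
      = ∑ a ∈ s, v a j • c a • (WithLp.toLp 2 (u a) : EuclideanSpace ℝ ι) := by
  ext i
  simp only [col_apply, Matrix.sum_apply, Matrix.smul_apply, vecMulVec_apply, smul_eq_mul,
    WithLp.ofLp_sum, WithLp.ofLp_smul, Finset.sum_apply, Pi.smul_apply]
  exact Finset.sum_congr rfl fun a _ => by ring

theorem sum_norm_sq_map_col_sum_smul_vecMulVec {κ ι ι' F : Type*} [Fintype ι] [Fintype ι']
    [DecidableEq κ] [NormedAddCommGroup F] [InnerProductSpace ℝ F]
    (T : EuclideanSpace ℝ ι →ₗ[ℝ] F) {v : κ → ι' → ℝ}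
    (hv : ∀ a b, v a ⬝ᵥ v b = if a = b then (1 : ℝ) else 0)
    (s : Finset κ) (c : κ → ℝ) (u : κ → ι → ℝ) :
    ∑ j, ‖T (WithLp.toLp 2 ((∑ a ∈ s, c a • vecMulVec (u a) (v a)).col j))‖ ^ 2
      = ∑ a ∈ s, c a ^ 2 * ‖T (WithLp.toLp 2 (u a))‖ ^ 2 := by
  simp_rw [toLp_col_sum_smul_vecMulVec, map_sum, map_smul, sum_norm_sq_sum_smul_of_orthonormal hv,
    norm_smul, mul_pow, Real.norm_eq_abs, sq_abs]

theorem frobNorm_eq_sqrt_sum_norm_sq_col {n m : ℕ} (A : Matrix (Fin n) (Fin m) ℝ) :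
    frobNorm A = √(∑ j, ‖(WithLp.toLp 2 (A.col j) : EuclideanSpace ℝ (Fin n))‖ ^ 2) := by
  simp only [frobNorm, EuclideanSpace.real_norm_sq_eq]
  rw [Finset.sum_comm]
  rfl

theorem frobNorm_sum_smul_vecMulVec {κ : Type*} [DecidableEq κ] {n m : ℕ} {u : κ → Fin n → ℝ}
    {v : κ → Fin m → ℝ} (hu : ∀ a b, u a ⬝ᵥ u b = if a = b then (1 : ℝ) else 0)
    (hv : ∀ a b, v a ⬝ᵥ v b = if a = b then (1 : ℝ) else 0) (s : Finset κ) (c : κ → ℝ) :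
    frobNorm (∑ a ∈ s, c a • vecMulVec (u a) (v a)) = √(∑ a ∈ s, c a ^ 2) := by
  have := sum_norm_sq_map_col_sum_smul_vecMulVec LinearMap.id hv s c u
  simp only [LinearMap.id_apply, (orthonormal_toLp_of_dotProduct_s5 hu).norm_eq_one, one_pow,
    mul_one] at this
  rw [frobNorm_eq_sqrt_sum_norm_sq_col, this]

theorem Submodule.norm_sq_sub_norm_sq_starProjection_le {E : Type*} [NormedAddCommGroup E]
    [InnerProductSpace ℝ E] (K : Submodule ℝ E) [K.HasOrthogonalProjection] (x : E) {y : E}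
    (hy : y ∈ K) : ‖x‖ ^ 2 - ‖K.starProjection x‖ ^ 2 ≤ ‖x - y‖ ^ 2 := by
  have hpyth : ‖x‖ ^ 2 = ‖K.starProjection x‖ ^ 2 + ‖x - K.starProjection x‖ ^ 2 := by
    rw [K.norm_sq_eq_add_norm_sq_starProjection x, K.starProjection_orthogonal']
    rfl
  have hmin : ‖x - K.starProjection x‖ ≤ ‖x - y‖ := by
    rw [K.starProjection_minimal]
    exact ciInf_le ⟨0, by rintro _ ⟨z, rfl⟩; positivity⟩ (⟨y, hy⟩ : K)
  nlinarith [norm_nonneg (x - K.starProjection x)]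

theorem Submodule.sum_norm_sq_starProjection_le_finrank {κ 𝕜 E : Type*} [RCLike 𝕜]
    [NormedAddCommGroup E] [InnerProductSpace 𝕜 E] (K : Submodule 𝕜 E) [FiniteDimensional 𝕜 K]
    (s : Finset κ) {u : κ → E} (hu : Orthonormal 𝕜 u) :
    ∑ a ∈ s, ‖K.starProjection (u a)‖ ^ 2 ≤ Module.finrank 𝕜 K := by
  set b := stdOrthonormalBasis 𝕜 K
  calc ∑ a ∈ s, ‖K.starProjection (u a)‖ ^ 2
      = ∑ a ∈ s, ∑ l, ‖inner 𝕜 (b l : E) (u a)‖ ^ 2 := by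
        refine Finset.sum_congr rfl fun a _ => ?_
        rw [K.starProjection_apply, ← Submodule.coe_norm,
          ← b.sum_sq_norm_inner_right (K.orthogonalProjectionOnto (u a))]
        simp_rw [K.inner_orthogonalProjectionOnto_eq_of_mem_left]
    _ = ∑ l, ∑ a ∈ s, ‖inner 𝕜 (u a) (b l : E)‖ ^ 2 := by
        rw [Finset.sum_comm]
        simp_rw [norm_inner_symm (b _ : E)]
    _ ≤ ∑ l, ‖(b l : E)‖ ^ 2 := Finset.sum_le_sum fun l _ => hu.sum_inner_products_le _
    _ = Module.finrank 𝕜 K := by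
        simp_rw [← Submodule.coe_norm, b.norm_eq_one]
        simp

def Matrix.colSpace {𝕜 : Type*} [RCLike 𝕜] {m n : Type*} (A : Matrix m n 𝕜) :
    Submodule 𝕜 (EuclideanSpace 𝕜 m) :=
  Submodule.span 𝕜 (Set.range fun j => WithLp.toLp 2 (A.col j))

theorem Matrix.finrank_colSpace {𝕜 : Type*} [RCLike 𝕜] {m n : Type*} [Fintype m] [Fintype n]
    (A : Matrix m n 𝕜) : Module.finrank 𝕜 A.colSpace = A.rank := by
  rw [rank_eq_finrank_span_cols,
    ← LinearEquiv.finrank_map_eq (WithLp.linearEquiv 2 𝕜 (m → 𝕜)).symm, Submodule.map_span,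
    ← Set.range_comp]
  rfl

theorem le_frobNorm_sum_smul_vecMulVec_sub_sq {κ : Type*} [Fintype κ] [DecidableEq κ] {n m : ℕ}
    {u : κ → Fin n → ℝ} {v : κ → Fin m → ℝ}
    (hu : ∀ a b, u a ⬝ᵥ u b = if a = b then (1 : ℝ) else 0)
    (hv : ∀ a b, v a ⬝ᵥ v b = if a = b then (1 : ℝ) else 0) (lam : κ → ℝ)
    (A' : Matrix (Fin n) (Fin m) ℝ) :
    ∑ a, lam a ^ 2 - ∑ a, lam a ^ 2 * ‖A'.colSpace.starProjection (WithLp.toLp 2 (u a))‖ ^ 2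
      ≤ frobNorm (∑ a, lam a • vecMulVec (u a) (v a) - A') ^ 2 := by
  set A := ∑ a, lam a • vecMulVec (u a) (v a)
  set K := A'.colSpace
  have hcols := sum_norm_sq_map_col_sum_smul_vecMulVec LinearMap.id hv Finset.univ lam u
  have hproj := sum_norm_sq_map_col_sum_smul_vecMulVec
    K.starProjection.toLinearMap hv Finset.univ lam u
  simp only [LinearMap.id_apply, ContinuousLinearMap.coe_coe,
    (orthonormal_toLp_of_dotProduct_s5 hu).norm_eq_one, one_pow, mul_one] at hcols hproj
  rw [frobNorm_eq_sqrt_sum_norm_sq_col, Real.sq_sqrt (by positivity), ← hcols, ← hproj,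
    ← Finset.sum_sub_distrib]
  calc _ ≤ ∑ j, ‖(WithLp.toLp 2 (A.col j) - WithLp.toLp 2 (A'.col j) :
          EuclideanSpace ℝ (Fin n))‖ ^ 2 :=
        Finset.sum_le_sum fun j _ =>
          K.norm_sq_sub_norm_sq_starProjection_le _ (Submodule.subset_span ⟨j, rfl⟩)
    _ = _ := by
        simp only [← WithLp.toLp_sub]
        rfl

theorem sum_mul_le_sum_filter_lt_of_antitone {r k : ℕ} {μ t : Fin r → ℝ} (hμ : Antitone μ)
    (hμ0 : ∀ i, 0 ≤ μ i) (ht0 : ∀ i, 0 ≤ t i) (ht1 : ∀ i, t i ≤ 1) (ht : ∑ i, t i ≤ k) :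
    ∑ i, μ i * t i ≤ ∑ i ∈ Finset.univ.filter (fun i : Fin r => (i : ℕ) < k), μ i := by
  rcases le_or_gt r k with hrk | hkr
  · rw [Finset.filter_true_of_mem fun i _ => i.isLt.trans_le hrk]
    exact Finset.sum_le_sum fun i _ => mul_le_of_le_one_right (hμ0 i) (ht1 i)
  set c := μ ⟨k, hkr⟩
  -- Compare termwise with the threshold `c = μ k`; summed, the right side is `c * (∑ t - k) ≤ 0`.
  have hterm : ∀ i : Fin r, μ i * t i - (if (i : ℕ) < k then μ i else 0)
      ≤ c * (t i - if (i : ℕ) < k then 1 else 0) := by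
    intro i
    split_ifs with hi
    · nlinarith [hμ (show i ≤ ⟨k, hkr⟩ from Fin.mk_le_mk.2 hi.le), ht1 i]
    · nlinarith [hμ (show (⟨k, hkr⟩ : Fin r) ≤ i from Fin.mk_le_mk.2 (not_lt.1 hi)), ht0 i]
  have hcard : (Finset.univ.filter (fun i : Fin r => (i : ℕ) < k)).card = k := by
    rw [Fin.card_filter_val_lt, min_eq_right hkr.le]
  calc ∑ i, μ i * t i
      ≤ ∑ i ∈ Finset.univ.filter (fun i : Fin r => (i : ℕ) < k), μ i + c * (∑ i, t i - k) := by
        have := Finset.sum_le_sum fun i (_ : i ∈ Finset.univ) => hterm i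
        simp only [Finset.sum_sub_distrib, ← Finset.mul_sum, Finset.sum_ite, Finset.sum_const_zero,
          Finset.sum_const, hcard, nsmul_eq_mul, mul_one, add_zero] at this
        linarith
    _ ≤ _ := by nlinarith [hμ0 ⟨k, hkr⟩]

theorem Submodule.sum_mul_norm_sq_starProjection_le {𝕜 E : Type*} [RCLike 𝕜]
    [NormedAddCommGroup E] [InnerProductSpace 𝕜 E] (K : Submodule 𝕜 E) [FiniteDimensional 𝕜 K]
    {r k : ℕ} (hK : Module.finrank 𝕜 K ≤ k) {u : Fin r → E} (hu : Orthonormal 𝕜 u)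
    {μ : Fin r → ℝ} (hμ : Antitone μ) (hμ0 : ∀ i, 0 ≤ μ i) :
    ∑ a, μ a * ‖K.starProjection (u a)‖ ^ 2
      ≤ ∑ a ∈ Finset.univ.filter (fun a : Fin r => (a : ℕ) < k), μ a := by
  refine sum_mul_le_sum_filter_lt_of_antitone hμ hμ0 (fun a => sq_nonneg _) (fun a => ?_) ?_
  · calc ‖K.starProjection (u a)‖ ^ 2 ≤ ‖u a‖ ^ 2 := by
          gcongr; exact K.norm_starProjection_apply_le _
      _ = 1 := by rw [hu.norm_eq_one, one_pow]
  · calc _ ≤ (Module.finrank 𝕜 K : ℝ) := K.sum_norm_sq_starProjection_le_finrank _ hu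
      _ ≤ k := by exact_mod_cast hK

theorem eckart_young_frobenius_general (n m r k : ℕ)
    (A A' : Matrix (Fin n) (Fin m) ℝ)
    (lam : Fin r → ℝ) (u : Fin r → Fin n → ℝ) (v : Fin r → Fin m → ℝ)
    (hu : ∀ i j, u i ⬝ᵥ u j = if i = j then (1 : ℝ) else 0)
    (hv : ∀ i j, v i ⬝ᵥ v j = if i = j then (1 : ℝ) else 0)
    (hpos : ∀ i, 0 < lam i)
    (hmono : ∀ i j : Fin r, i ≤ j → lam j ≤ lam i)
    (hA : A = ∑ i, lam i • vecMulVec (u i) (v i))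
    (hA' : A'.rank ≤ k) :
    frobNorm (A - ∑ i ∈ Finset.univ.filter (fun i : Fin r => (i : ℕ) < k),
      lam i • vecMulVec (u i) (v i)) ≤ frobNorm (A - A') := by
  set s := Finset.univ.filter (fun i : Fin r => (i : ℕ) < k)
  have hweights := A'.colSpace.sum_mul_norm_sq_starProjection_le
    (A'.finrank_colSpace.trans_le hA') (orthonormal_toLp_of_dotProduct_s5 hu)
    (fun i j hij => pow_le_pow_left₀ (hpos j).le (hmono i j hij) 2) (fun a => sq_nonneg (lam a))
  have hbest := le_frobNorm_sum_smul_vecMulVec_sub_sq hu hv lam A'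
  have htail : A - ∑ a ∈ s, lam a • vecMulVec (u a) (v a)
      = ∑ a ∈ sᶜ, lam a • vecMulVec (u a) (v a) := by
    rw [hA, ← Finset.sum_compl_add_sum s, add_sub_cancel_right]
  rw [htail, frobNorm_sum_smul_vecMulVec hu hv, Real.sqrt_le_iff, hA]
  refine ⟨Real.sqrt_nonneg _, ?_⟩
  linarith [Finset.sum_compl_add_sum s fun a => lam a ^ 2]

/-- Eckart–Young theorem (Frobenius norm): the rank-`k` truncated SVD `A_{(k)}` is a best
rank-`≤ k` approximation of `A` in Frobenius norm. -/
theorem eckart_young_frobenius (n m r k : ℕ) (hk : k ≤ r)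
    (A A' : Matrix (Fin n) (Fin m) ℝ)
    (lam : Fin r → ℝ) (u : Fin r → Fin n → ℝ) (v : Fin r → Fin m → ℝ)
    (hu : ∀ i j, u i ⬝ᵥ u j = if i = j then (1 : ℝ) else 0)
    (hv : ∀ i j, v i ⬝ᵥ v j = if i = j then (1 : ℝ) else 0)
    (hpos : ∀ i, 0 < lam i)
    (hmono : ∀ i j : Fin r, i ≤ j → lam j ≤ lam i)
    (hA : A = ∑ i, lam i • vecMulVec (u i) (v i))
    (hA' : A'.rank ≤ k) :
    frobNorm (A - ∑ i ∈ Finset.univ.filter (fun i : Fin r => (i : ℕ) < k),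
      lam i • vecMulVec (u i) (v i)) ≤ frobNorm (A - A') :=
  eckart_young_frobenius_general n m r k A A' lam u v hu hv hpos hmono hA hA'
end
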